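/- With notation as above (g continuous density, ξ_f = f'(1-G) - fg, f ∈ H²), for 0 ≤ s ≤ t ≤ T with G continuous: ∫ₛᵗ |ξ_f(t-u)| du ≤ 3((t-s)^{1/2} + w_G(t-s))·‖f‖_{H¹}, where ‖f‖²_{H¹} = ‖f‖²_{L²} + ‖f'‖²_{L²}. -/

import Mathlib

/-! After the substitution `u ↦ t - u` the integral becomes `∫₀^δ |ξ_f|` with `δ = t - s`.
On `[0, ∞)` we have `0 ≤ G ≤ 1`, so `|ξ_f| ≤ |f'| + ‖f‖_∞ g`. Cauchy–Schwarz gives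
`∫₀^δ |f'| ≤ √δ ‖f'‖_{L²}`, and `∫₀^δ g = G δ - G 0 ≤ w_G(δ)`. The sup norm is controlled by the
one-dimensional Sobolev embedding `f(u)² ≤ 2 ‖f‖²_{H¹}`: some `v ∈ [u, u + 1]` has `f(v)²` below
its mean, hence below `‖f‖²_{L²}`, and `(f²)' = 2 f f' ≥ -(f² + f'²)` integrated from `u` to `v`
bounds `f(u)² - f(v)²` by `‖f‖²_{H¹}`. -/
open MeasureTheory Set

theorem integral_abs_le_sqrt_measureReal_mul_sqrt_integral_sq {α : Type*} [MeasurableSpace α]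
    {μ : Measure α} [IsFiniteMeasure μ] {h : α → ℝ} (hh : MemLp h 2 μ) :
    ∫ x, |h x| ∂μ ≤ √(μ.real univ) * √(∫ x, h x ^ 2 ∂μ) := by
  have holder := integral_mul_le_Lp_mul_Lq_of_nonneg Real.HolderConjugate.two_two
    (ae_of_all _ fun x => abs_nonneg (h x)) (ae_of_all _ fun _ => zero_le_one)
    (by norm_num; exact hh.abs) (memLp_const (1 : ℝ))
  simpa [Real.sqrt_eq_rpow, mul_comm] using holder

theorem sq_le_sq_add_integral_sq_add_sq {f f' : ℝ → ℝ} {u v : ℝ} (huv : u ≤ v)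
    (hd : ∀ x ∈ Icc u v, HasDerivAt f (f' x) x)
    (hint : IntegrableOn (fun x => f x ^ 2 + f' x ^ 2) (Icc u v)) :
    f u ^ 2 ≤ f v ^ 2 + ∫ x in u..v, (f x ^ 2 + f' x ^ 2) := by
  have hsq : ∀ x ∈ Icc u v, HasDerivAt (fun y => -f y ^ 2) (-(2 * f x * f' x)) x := fun x hx => by
    simpa using ((hd x hx).fun_pow 2).fun_neg
  have := intervalIntegral.sub_le_integral_of_hasDeriv_right_of_le huv
    (fun x hx => (hsq x hx).continuousAt.continuousWithinAt)
    (fun x hx => (hsq x (Ioo_subset_Icc_self hx)).hasDerivWithinAt) hint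
    fun x _ => by nlinarith [sq_nonneg (f x + f' x)]
  linarith

theorem setIntegral_sq_le_of_subset {f : ℝ → ℝ} {s t : Set ℝ}
    (hf : IntegrableOn (fun x => f x ^ 2) t) (hst : s ⊆ t) :
    ∫ x in s, f x ^ 2 ≤ ∫ x in t, f x ^ 2 :=
  setIntegral_mono_set hf (ae_of_all _ fun x => sq_nonneg (f x)) hst.eventuallyLE

theorem exists_mem_Icc_sq_le_integral_Ici {f : ℝ → ℝ} {u : ℝ}
    (hf : IntegrableOn (fun x => f x ^ 2) (Ici u)) :
    ∃ v ∈ Icc u (u + 1), f v ^ 2 ≤ ∫ x in Ici u, f x ^ 2 := by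
  obtain ⟨v, hv, hfv⟩ := exists_le_setAverage (by simp) (by simp)
    (hf.mono_set (Icc_subset_Ici_self : Icc u (u + 1) ⊆ Ici u))
  refine ⟨v, hv, hfv.trans ?_⟩
  rw [setAverage_eq, measureReal_def, Real.volume_Icc, add_sub_cancel_left]
  simp only [ENNReal.ofReal_one, ENNReal.toReal_one, inv_one, one_smul]
  exact setIntegral_sq_le_of_subset hf Icc_subset_Ici_self

theorem sq_le_two_mul_integral_Ici_sq_add {f f' : ℝ → ℝ} (hd : ∀ x, HasDerivAt f (f' x) x)
    {u : ℝ} (hf : IntegrableOn (fun x => f x ^ 2) (Ici u))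
    (hf' : IntegrableOn (fun x => f' x ^ 2) (Ici u)) :
    f u ^ 2 ≤ 2 * (∫ x in Ici u, f x ^ 2) + ∫ x in Ici u, f' x ^ 2 := by
  obtain ⟨v, hv, hfv⟩ := exists_mem_Icc_sq_le_integral_Ici hf
  have hsub : Ioc u v ⊆ Ici u := Ioc_subset_Icc_self.trans Icc_subset_Ici_self
  have hFTC := sq_le_sq_add_integral_sq_add_sq hv.1 (fun x _ => hd x)
    ((hf.add hf').mono_set Icc_subset_Ici_self)
  rw [intervalIntegral.integral_of_le hv.1,
    integral_add (hf.mono_set hsub) (hf'.mono_set hsub)] at hFTC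
  linarith [setIntegral_sq_le_of_subset hf hsub, setIntegral_sq_le_of_subset hf' hsub]

theorem abs_le_sqrt_two_mul_sqrt_integral_Ici_sq_add {f f' : ℝ → ℝ}
    (hd : ∀ x, HasDerivAt f (f' x) x) (hf : IntegrableOn (fun x => f x ^ 2) (Ici 0))
    (hf' : IntegrableOn (fun x => f' x ^ 2) (Ici 0)) {u : ℝ} (hu : 0 ≤ u) :
    |f u| ≤ √2 * √((∫ x in Ici 0, f x ^ 2) + ∫ x in Ici 0, f' x ^ 2) := by
  have hsub : Ici u ⊆ Ici 0 := Ici_subset_Ici.2 hu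
  have h := sq_le_two_mul_integral_Ici_sq_add hd (hf.mono_set hsub) (hf'.mono_set hsub)
  have h₀ : 0 ≤ ∫ x in Ici 0, f' x ^ 2 :=
    setIntegral_nonneg measurableSet_Ici fun x _ => sq_nonneg _
  rw [← Real.sqrt_mul zero_le_two]
  exact Real.abs_le_sqrt (by
    linarith [setIntegral_sq_le_of_subset hf hsub, setIntegral_sq_le_of_subset hf' hsub])

theorem intervalIntegral_mem_Icc_zero_one {g : ℝ → ℝ} (hg₀ : ∀ x, 0 ≤ g x)
    (hg₁ : ∫ x in Ici 0, g x = 1) {x : ℝ} (hx : 0 ≤ x) : ∫ u in 0..x, g u ∈ Icc 0 1 := by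
  rw [intervalIntegral.integral_of_le hx, ← hg₁]
  exact ⟨setIntegral_nonneg measurableSet_Ioc fun y _ => hg₀ y,
    setIntegral_mono_set (Integrable.of_integral_ne_zero (by simp [hg₁])) (ae_of_all _ hg₀)
      (Ioc_subset_Ioi_self.trans Ioi_subset_Ici_self).eventuallyLE⟩

theorem abs_mul_one_sub_sub_mul_le {a b c d B : ℝ} (hc₀ : 0 ≤ c) (hc₁ : c ≤ 1) (hd : 0 ≤ d)
    (hb : |b| ≤ B) : |a * (1 - c) - b * d| ≤ |a| + B * d :=
  calc |a * (1 - c) - b * d| ≤ |a| * |1 - c| + |b| * d := by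
        simpa [abs_mul, abs_of_nonneg hd] using abs_sub (a * (1 - c)) (b * d)
    _ ≤ |a| * 1 + B * d := by
        gcongr
        rw [abs_of_nonneg (sub_nonneg.2 hc₁)]
        linarith
    _ = |a| + B * d := by rw [mul_one]

theorem integral_abs_mul_one_sub_sub_mul_le {f f' g G : ℝ → ℝ} {a b B : ℝ} (hab : a ≤ b)
    (hf' : IntegrableOn f' (Ioc a b)) (hg : IntegrableOn g (Ioc a b))
    (hg₀ : ∀ x ∈ Ioc a b, 0 ≤ g x) (hG : ∀ x ∈ Ioc a b, G x ∈ Icc 0 1)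
    (hf : ∀ x ∈ Ioc a b, |f x| ≤ B) :
    ∫ x in a..b, |f' x * (1 - G x) - f x * g x| ≤ (∫ x in a..b, |f' x|) + B * ∫ x in a..b, g x := by
  simp only [intervalIntegral.integral_of_le hab]
  rw [← integral_const_mul, ← integral_add hf'.abs (hg.const_mul B)]
  refine integral_mono_of_nonneg (ae_of_all _ fun _ => abs_nonneg _)
    (hf'.abs.add (hg.const_mul B)) ?_
  filter_upwards [ae_restrict_mem measurableSet_Ioc] with x hx
  exact abs_mul_one_sub_sub_mul_le (hG x hx).1 (hG x hx).2 (hg₀ x hx) (hf x hx)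

theorem intervalIntegral_abs_le_sqrt_mul_sqrt_setIntegral_sq {h : ℝ → ℝ} {a b : ℝ} {s : Set ℝ}
    (hab : a ≤ b) (hs : Ioc a b ⊆ s) (hh : MemLp h 2 (volume.restrict (Ioc a b)))
    (hsq : IntegrableOn (fun x => h x ^ 2) s) :
    ∫ x in a..b, |h x| ≤ √(b - a) * √(∫ x in s, h x ^ 2) := by
  rw [intervalIntegral.integral_of_le hab]
  calc _ ≤ √(b - a) * √(∫ x in Ioc a b, h x ^ 2) := by
        simpa [measureReal_restrict_apply_univ, hab]
          using integral_abs_le_sqrt_measureReal_mul_sqrt_integral_sq hh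
    _ ≤ √(b - a) * √(∫ x in s, h x ^ 2) :=
        mul_le_mul_of_nonneg_left (Real.sqrt_le_sqrt (setIntegral_sq_le_of_subset hsq hs))
          (Real.sqrt_nonneg _)

theorem stmt14_general (g G : ℝ → ℝ) (hg0 : ∀ x, 0 ≤ g x)
    (hg1 : ∫ x in Ici (0:ℝ), g x = 1)
    (hG : ∀ x, G x = ∫ u in (0:ℝ)..x, g u)
    (T : ℝ)
    (wG : ℝ → ℝ)
    (hwG : ∀ a b, a ∈ Icc (0:ℝ) T → b ∈ Icc (0:ℝ) T → |G a - G b| ≤ wG |a - b|)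
    (f f₁ : ℝ → ℝ)
    (hd1 : ∀ x, HasDerivAt f (f₁ x) x)
    (hf2 : IntegrableOn (fun x => (f x) ^ 2) (Ici 0))
    (hf12 : IntegrableOn (fun x => (f₁ x) ^ 2) (Ici 0)) :
    ∀ s t : ℝ, 0 ≤ s → s ≤ t → t ≤ T →
      (∫ u in s..t, |f₁ (t - u) * (1 - G (t - u)) - f (t - u) * g (t - u)|)
        ≤ 3 * (Real.sqrt (t - s) + wG (t - s)) *
            Real.sqrt ((∫ x in Ici (0:ℝ), (f x) ^ 2) + (∫ x in Ici (0:ℝ), (f₁ x) ^ 2)) := by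
  intro s t hs hst htT
  set N := √((∫ x in Ici (0:ℝ), (f x) ^ 2) + (∫ x in Ici (0:ℝ), (f₁ x) ^ 2))
  have hδ : 0 ≤ t - s := sub_nonneg.2 hst
  have hsub : Ioc 0 (t - s) ⊆ Ici 0 := Ioc_subset_Ioi_self.trans Ioi_subset_Ici_self
  have hg : IntegrableOn g (Ici 0) := Integrable.of_integral_ne_zero (by simp [hg1])
  have hGδ : |∫ x in 0..t - s, g x| ≤ wG (t - s) := by
    simpa [hG, abs_of_nonneg hδ] using hwG (t - s) 0 ⟨hδ, by linarith⟩ ⟨le_rfl, by linarith⟩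
  have hf₁ : MemLp f₁ 2 (volume.restrict (Ioc 0 (t - s))) :=
    (memLp_two_iff_integrable_sq
      ((funext fun x => (hd1 x).deriv) ▸ measurable_deriv f).aestronglyMeasurable).2
      (hf12.mono_set hsub)
  have hCS : ∫ x in 0..t - s, |f₁ x| ≤ √(t - s) * N := by
    have hA : 0 ≤ ∫ x in Ici (0:ℝ), f x ^ 2 :=
      setIntegral_nonneg measurableSet_Ici fun x _ => sq_nonneg (f x)
    simpa using (intervalIntegral_abs_le_sqrt_mul_sqrt_setIntegral_sq hδ hsub hf₁ hf12).trans
      (mul_le_mul_of_nonneg_left (Real.sqrt_le_sqrt (by linarith)) (Real.sqrt_nonneg _))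
  rw [intervalIntegral.integral_comp_sub_left (fun x => |f₁ x * (1 - G x) - f x * g x|) t,
    sub_self]
  calc _ ≤ (∫ x in 0..t - s, |f₁ x|) + √2 * N * ∫ x in 0..t - s, g x :=
        integral_abs_mul_one_sub_sub_mul_le hδ (hf₁.integrable one_le_two)
          (hg.mono_set hsub) (fun x _ => hg0 x)
          (fun x hx => hG x ▸ intervalIntegral_mem_Icc_zero_one hg0 hg1 hx.1.le)
          fun x hx => abs_le_sqrt_two_mul_sqrt_integral_Ici_sq_add hd1 hf2 hf12 hx.1.le
    _ ≤ 3 * (√(t - s) + wG (t - s)) * N := by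
        have hN : 0 ≤ N := Real.sqrt_nonneg _
        have hJ : ∫ x in 0..t - s, g x ≤ wG (t - s) := (le_abs_self _).trans hGδ
        have hJ₀ : 0 ≤ ∫ x in 0..t - s, g x := intervalIntegral.integral_nonneg hδ fun x _ => hg0 x
        have h2 : √2 ≤ 3 := Real.sqrt_le_iff.2 ⟨by norm_num, by norm_num⟩
        nlinarith [mul_nonneg (Real.sqrt_nonneg (t - s)) hN,
          mul_le_mul_of_nonneg_right (mul_le_mul h2 hJ hJ₀ zero_le_three) hN]

/-- For the convolution kernel `ξ_f = f'(1-G) - fg` and `f ∈ H¹[0,∞)`, for `0 ≤ s ≤ t ≤ T`: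
`∫ₛᵗ |ξ_f(t-u)| du ≤ 3(√(t-s) + w_G(t-s))·‖f‖_{H¹}`. -/
theorem stmt14 (g G : ℝ → ℝ) (hgc : Continuous g) (hg0 : ∀ x, 0 ≤ g x)
    (hg1 : ∫ x in Ici (0:ℝ), g x = 1)
    (hG : ∀ x, G x = ∫ u in (0:ℝ)..x, g u)
    (T : ℝ) (hT : 0 < T)
    (wG : ℝ → ℝ)
    (hwG : ∀ a b, a ∈ Icc (0:ℝ) T → b ∈ Icc (0:ℝ) T → |G a - G b| ≤ wG |a - b|)
    (f f₁ : ℝ → ℝ)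
    (hd1 : ∀ x, HasDerivAt f (f₁ x) x)
    (hf2 : IntegrableOn (fun x => (f x) ^ 2) (Ici 0))
    (hf12 : IntegrableOn (fun x => (f₁ x) ^ 2) (Ici 0)) :
    ∀ s t : ℝ, 0 ≤ s → s ≤ t → t ≤ T →
      (∫ u in s..t, |f₁ (t - u) * (1 - G (t - u)) - f (t - u) * g (t - u)|)
        ≤ 3 * (Real.sqrt (t - s) + wG (t - s)) *
            Real.sqrt ((∫ x in Ici (0:ℝ), (f x) ^ 2) + (∫ x in Ici (0:ℝ), (f₁ x) ^ 2)) :=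
  stmt14_general g G hg0 hg1 hG T wG hwG f f₁ hd1 hf2 hf12
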